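/- arXiv:2405.09391 — 4 statements merged into one kernel-verified Lean document; each statement's English description precedes it below -/
import Mathlib

section
/- A stochastic matrix f ∈ ℝ^{n×m} is surjective (i.e., every Dirac distribution on n appears as a column of f) if and only if the induced convex map D(m) → D(n) is surjective. -/
/-- `D n` is the set of probability vectors of length `n`. -/
def D (n : ℕ) : Set (Fin n → ℝ) := {p | (∀ i, 0 ≤ p i) ∧ ∑ i, p i = 1}

/-- A stochastic matrix is surjective (every Dirac on the codomain is one of
its columns) iff the induced convex map `D m → D n` is surjective. -/
theorem surjective_stochastic_iff_map_surjective {m n : ℕ}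
    (f : Fin n → Fin m → ℝ) (h1 : ∀ a i, 0 ≤ f a i) (h2 : ∀ i, ∑ a, f a i = 1) :
    (∀ j : Fin n, ∃ i : Fin m, (fun a => f a i) = fun a => if a = j then (1 : ℝ) else 0)
    ↔ ∀ q ∈ D n, ∃ p ∈ D m, (fun a => ∑ i, f a i * p i) = q := by
  constructor
  · intro hdirac q hq
    choose g hg using hdirac
    refine ⟨fun i => ∑ j, if g j = i then q j else 0, ⟨?_, ?_⟩, ?_⟩
    · intro i
      exact Finset.sum_nonneg fun j _ => by have := hq.1 j; positivity
    · rw [Finset.sum_comm]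
      simpa using hq.2
    · funext a
      have : ∀ i, f a i * ∑ j, (if g j = i then q j else 0)
          = ∑ j, (if g j = i then f a (g j) * q j else 0) := by
        intro i
        rw [Finset.mul_sum]
        exact Finset.sum_congr rfl fun j _ => by split <;> simp_all
      simp_rw [this]
      rw [Finset.sum_comm]
      have : ∀ j, (∑ i, if g j = i then f a (g j) * q j else 0) = f a (g j) * q j := by
        intro j; simp
      simp_rw [this]
      have hgv : ∀ j, f a (g j) = if a = j then 1 else 0 := fun j => congrFun (hg j) a
      simp_rw [hgv]
      simp
  · intro hsurj j
    obtain ⟨p, hp, heq⟩ := hsurj (fun a => if a = j then 1 else 0) ⟨fun a => by positivity, by simp⟩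
    have heq' : ∀ a, ∑ i, f a i * p i = if a = j then 1 else 0 := fun a => congrFun heq a
    -- find i with p i > 0
    have : ∃ i, 0 < p i := by
      by_contra hcon
      push_neg at hcon
      have : ∑ i, p i = 0 :=
        Finset.sum_eq_zero fun i _ => le_antisymm (hcon i) (hp.1 i)
      rw [hp.2] at this; norm_num at this
    obtain ⟨i0, hi0⟩ := this
    refine ⟨i0, funext fun a => ?_⟩
    by_cases ha : a = j
    · subst ha
      simp only [if_pos rfl]
      -- all other entries of column i0 vanish
      have hzero : ∀ b, b ≠ a → f b i0 = 0 := by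
        intro b hb
        have hs : ∑ i, f b i * p i = 0 := by rw [heq' b, if_neg hb]
        have hterm : f b i0 * p i0 = 0 := by
          have := (Finset.sum_eq_zero_iff_of_nonneg
            (fun i _ => mul_nonneg (h1 b i) (hp.1 i))).mp hs i0 (Finset.mem_univ _)
          exact this
        exact (mul_eq_zero.mp hterm).resolve_right (ne_of_gt hi0)
      have := h2 i0
      rwa [Finset.sum_eq_single a (fun b _ hb => hzero b hb) (by simp)] at this
    · rw [if_neg ha]
      have hs : ∑ i, f a i * p i = 0 := by rw [heq' a, if_neg ha]
      have hterm : f a i0 * p i0 = 0 :=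
        (Finset.sum_eq_zero_iff_of_nonneg
          (fun i _ => mul_nonneg (h1 a i) (hp.1 i))).mp hs i0 (Finset.mem_univ _)
      exact (mul_eq_zero.mp hterm).resolve_right (ne_of_gt hi0)
end

section
/- Let f ∈ ℝ^{m×γ} and g ∈ ℝ^{n×(ε×m)} be stochastic matrices (interpreting g as a family of stochastic maps g(−, j) : ε → n for j ∈ m). Define the composite (g ∘ f)(i, k) = Σ_{j∈m} g(k, j)·f(j, i) for (i,k) ∈ γ×ε, and define R(f) = image of the columns of f as a convex subset of D(m), R(g)(j) = convex hull of columns { g(−, j)(k) : k ∈ ε }. Then the image of g ∘ f (as a convex subset of D(n)) is contained in the set ⋃ over extreme points x of R(f) of the convex-combination Σ_j x_j · R(g)(j), convexly closed. I.e., image(g ∘ f) ⊆ R(g)*(image(f)). -/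
/-!
For a fixed column `k` of `g`, the generator `(g ∘ f)(i, k)` is the image of the column `f(-, i)`
under the linear map `L x = ∑ j, x j • g(-, k, j)`. By Minkowski's theorem `f(-, i)` is a convex
combination of extreme points `x` of `R(f)`, so `L (f(-, i))` is the same convex combination of
the points `L x`, each of which lies in `R(g)*(R(f))` with `p j = g(-, k, j)`.
-/

open Set

theorem Set.Finite.convexHull_extremePoints_convexHull {E : Type*} [AddCommGroup E] [Module ℝ E]
    [TopologicalSpace E] [T2Space E] [IsTopologicalAddGroup E] [ContinuousSMul ℝ E]
    [LocallyConvexSpace ℝ E] {V : Set E} (hV : V.Finite) :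
    convexHull ℝ ((convexHull ℝ V).extremePoints ℝ) = convexHull ℝ V := by
  have hext : ((convexHull ℝ V).extremePoints ℝ).Finite :=
    hV.subset extremePoints_convexHull_subset
  simpa only [(hext.isClosed_convexHull ℝ).closure_eq] using
    closure_convexHull_extremePoints (hV.isCompact_convexHull ℝ) (convex_convexHull ℝ V)

theorem oplax_composition_general {γ ε m n : ℕ}
    (f : Fin m → Fin γ → ℝ) (g : Fin n → Fin ε → Fin m → ℝ) :
    convexHull ℝ
        (Set.range (fun ik : Fin γ × Fin ε => fun a => ∑ j, g a ik.2 j * f j ik.1))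
      ⊆ convexHull ℝ
          {y | ∃ x ∈ Set.extremePoints ℝ
                  (convexHull ℝ (Set.range (fun i : Fin γ => fun j => f j i))),
               ∃ p : Fin m → Fin n → ℝ,
                 (∀ j, p j ∈ convexHull ℝ
                     (Set.range (fun k : Fin ε => fun a => g a k j))) ∧
                 y = ∑ j, x j • p j} := by
  refine convexHull_min ?_ (convex_convexHull ℝ _)
  rintro _ ⟨⟨i, k⟩, rfl⟩
  set cols := Set.range (fun i : Fin γ => fun j => f j i)
  let L := Fintype.linearCombination ℝ (fun j a => g a k j)
  have hcol : (fun j => f j i) ∈ convexHull ℝ ((convexHull ℝ cols).extremePoints ℝ) := by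
    rw [(finite_range _).convexHull_extremePoints_convexHull]
    exact subset_convexHull ℝ _ ⟨i, rfl⟩
  have hL : (fun a => ∑ j, g a k j * f j i) = L (fun j => f j i) := by
    ext a
    simp [L, Fintype.linearCombination_apply, mul_comm]
  dsimp only
  rw [hL]
  refine convexHull_mono ?_ (L.image_convexHull _ ▸ mem_image_of_mem L hcol)
  rintro _ ⟨x, hx, rfl⟩
  exact ⟨x, hx, _, fun j => subset_convexHull ℝ _ ⟨k, rfl⟩, Fintype.linearCombination_apply ..⟩

/-- Op-lax functoriality: the image (convex hull of columns) of the composite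
`g ∘ f` in `ImP` is contained in the Kleisli-`CP` composite `R(g)* (image f)`. -/
theorem oplax_composition {γ ε m n : ℕ}
    (f : Fin m → Fin γ → ℝ) (g : Fin n → Fin ε → Fin m → ℝ)
    (hf1 : ∀ j i, 0 ≤ f j i) (hf2 : ∀ i, ∑ j, f j i = 1)
    (hg1 : ∀ a k j, 0 ≤ g a k j) (hg2 : ∀ k j, ∑ a, g a k j = 1) :
    convexHull ℝ
        (Set.range (fun ik : Fin γ × Fin ε => fun a => ∑ j, g a ik.2 j * f j ik.1))
      ⊆ convexHull ℝ
          {y | ∃ x ∈ Set.extremePoints ℝ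
                  (convexHull ℝ (Set.range (fun i : Fin γ => fun j => f j i))),
               ∃ p : Fin m → Fin n → ℝ,
                 (∀ j, p j ∈ convexHull ℝ
                     (Set.range (fun k : Fin ε => fun a => g a k j))) ∧
                 y = ∑ j, x j • p j} :=
  oplax_composition_general f g
end

section
/- There exist stochastic matrices f (a column vector (1/2, 1/2)ᵀ, a map 1 → 2) and g : 2×2 → 3 (given blockwise by g(−, 1) = [[1,0],[0,1],[0,0]] and g(−, 2) = [[1,0],[0,0],[0,1]]) such that the image of the composite g ∘ f equals the convex hull of {(1,0,0), (0,1/2,1/2)}, while the Kleisli-CP composite R(g) ∘ R(f) equals the convex hull of {(1,0,0), (1/2,0,1/2), (1/2,1/2,0), (0,1/2,1/2)}, and the former is a proper subset of the latter. -/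
/-- The fair Bernoulli column vector `(1/2, 1/2)ᵀ`, a stochastic map `1 → 2`. -/
noncomputable def f14 : Fin 2 → ℝ := ![1/2, 1/2]

/-- The stochastic map `g : 2×2 → 3` given blockwise (entry `g a k j` is the
`a`-th coordinate of the `k`-th column of the `j`-th block). -/
noncomputable def g14 : Fin 3 → Fin 2 → Fin 2 → ℝ := fun a k j =>
  if j = 0 then ![![1,0], ![0,1], ![0,0]] a k else ![![1,0], ![0,0], ![0,1]] a k

/-- The columns of the composite `g ∘ f` (indexed by the Knightian grade `k`). -/
noncomputable def compCol : Fin 2 → Fin 3 → ℝ := fun k => fun a => ∑ j, f14 j * g14 a k j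

/-- `R(f)`: the convex hull of the (single) column of `f`. -/
noncomputable def Rf14 : Set (Fin 2 → ℝ) := convexHull ℝ {f14}

/-- `R(g) j`: the convex hull of the columns of the `j`-th block of `g`. -/
noncomputable def Rg14 (j : Fin 2) : Set (Fin 3 → ℝ) :=
  convexHull ℝ (Set.range (fun k : Fin 2 => fun a => g14 a k j))

/-- The Kleisli-`CP` composite `R(g) ∘ R(f)`. -/
noncomputable def kleisli14 : Set (Fin 3 → ℝ) :=
  convexHull ℝ {y | ∃ x ∈ Set.extremePoints ℝ Rf14,
    ∃ p : Fin 2 → Fin 3 → ℝ, (∀ j, p j ∈ Rg14 j) ∧ y = ∑ j, x j • p j}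

lemma range_fin_two' {α : Type*} (h : Fin 2 → α) : Set.range h = {h 0, h 1} := by
  ext y
  constructor
  · rintro ⟨k, rfl⟩; fin_cases k <;> simp
  · rintro (rfl | rfl)
    · exact ⟨0, rfl⟩
    · exact ⟨1, rfl⟩

lemma compCol_zero : compCol 0 = ![(1:ℝ),0,0] := by
  funext a; fin_cases a <;> simp [compCol, f14, g14, Fin.sum_univ_two, Matrix.vecHead, Matrix.vecTail] <;> norm_num

lemma compCol_one : compCol 1 = ![(0:ℝ),1/2,1/2] := by
  funext a; fin_cases a <;> simp [compCol, f14, g14, Fin.sum_univ_two, Matrix.vecHead, Matrix.vecTail] <;> norm_num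

lemma Rg14_zero : Rg14 0 = segment ℝ ![(1:ℝ),0,0] ![(0:ℝ),1,0] := by
  rw [Rg14, range_fin_two']
  have h0 : (fun a => g14 a 0 0) = ![(1:ℝ),0,0] := by
    funext a; fin_cases a <;> simp [g14, Matrix.vecHead, Matrix.vecTail]
  have h1 : (fun a => g14 a 1 0) = ![(0:ℝ),1,0] := by
    funext a; fin_cases a <;> simp [g14, Matrix.vecHead, Matrix.vecTail]
  rw [h0, h1, convexHull_pair]

lemma Rg14_one : Rg14 1 = segment ℝ ![(1:ℝ),0,0] ![(0:ℝ),0,1] := by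
  rw [Rg14, range_fin_two']
  have h0 : (fun a => g14 a 0 1) = ![(1:ℝ),0,0] := by
    funext a; fin_cases a <;> simp [g14, Matrix.vecHead, Matrix.vecTail]
  have h1 : (fun a => g14 a 1 1) = ![(0:ℝ),0,1] := by
    funext a; fin_cases a <;> simp [g14, Matrix.vecHead, Matrix.vecTail]
  rw [h0, h1, convexHull_pair]

lemma extreme_Rf14 : Set.extremePoints ℝ Rf14 = {f14} := by
  rw [Rf14, convexHull_singleton, extremePoints_singleton]

/-- The generating set of `kleisli14`. -/
noncomputable def S14 : Set (Fin 3 → ℝ) :=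
  {y | ∃ x ∈ Set.extremePoints ℝ Rf14,
    ∃ p : Fin 2 → Fin 3 → ℝ, (∀ j, p j ∈ Rg14 j) ∧ y = ∑ j, x j • p j}

lemma kleisli14_eq_hull_S14 : kleisli14 = convexHull ℝ S14 := rfl

/-- Abbreviation for the four-point target set. -/
noncomputable def T14 : Set (Fin 3 → ℝ) :=
  ({![(1:ℝ),0,0], ![1/2,0,1/2], ![1/2,1/2,0], ![0,1/2,1/2]} : Set (Fin 3 → ℝ))

lemma mem_S14 (p0 p1 : Fin 3 → ℝ) (h0 : p0 ∈ Rg14 0) (h1 : p1 ∈ Rg14 1) :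
    (1/2 : ℝ) • p0 + (1/2 : ℝ) • p1 ∈ S14 := by
  refine ⟨f14, by rw [extreme_Rf14]; rfl, ![p0, p1], ?_, ?_⟩
  · intro j; fin_cases j <;> simpa
  · simp [Fin.sum_univ_two, f14]

lemma S14_subset : S14 ⊆ convexHull ℝ T14 := by
  rintro y ⟨x, hx, p, hp, rfl⟩
  rw [extreme_Rf14, Set.mem_singleton_iff] at hx
  subst hx
  have hconv : Convex ℝ (convexHull ℝ T14) := convex_convexHull ℝ _
  have hp0 := hp 0; have hp1 := hp 1
  rw [Rg14_zero] at hp0; rw [Rg14_one] at hp1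
  obtain ⟨a, b, ha, hb, hab, hp0⟩ := hp0
  obtain ⟨c, d, hc, hd, hcd, hp1⟩ := hp1
  have key : ∑ j, f14 j • p j = ∑ i : Fin 4,
      ![a*c, a*d, b*c, b*d] i • ![![(1:ℝ),0,0], ![1/2,0,1/2], ![1/2,1/2,0], ![0,1/2,1/2]] i := by
    rw [Fin.sum_univ_two, ← hp0, ← hp1, Fin.sum_univ_four]
    funext i
    fin_cases i
    · simp [f14]; linear_combination (-(a/2))*hcd + (-(c/2))*hab
    · simp [f14]; linear_combination (-(b/2))*hcd
    · simp [f14]; linear_combination (-(d/2))*hab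
  rw [key]
  refine hconv.sum_mem (fun i _ => ?_) ?_ (fun i _ => ?_)
  · fin_cases i <;> simp <;> positivity
  · simp only [Fin.sum_univ_four]
    show a*c + a*d + b*c + b*d = 1
    nlinarith
  · refine subset_convexHull ℝ T14 ?_
    fin_cases i <;> simp [T14]

lemma T14_subset_S14 : T14 ⊆ S14 := by
  have e1 : ![(1:ℝ),0,0] ∈ Rg14 0 := by rw [Rg14_zero]; exact left_mem_segment ℝ _ _
  have e2 : ![(0:ℝ),1,0] ∈ Rg14 0 := by rw [Rg14_zero]; exact right_mem_segment ℝ _ _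
  have e1' : ![(1:ℝ),0,0] ∈ Rg14 1 := by rw [Rg14_one]; exact left_mem_segment ℝ _ _
  have e3 : ![(0:ℝ),0,1] ∈ Rg14 1 := by rw [Rg14_one]; exact right_mem_segment ℝ _ _
  rintro y (rfl | rfl | rfl | rfl)
  · have := mem_S14 _ _ e1 e1'
    convert this using 1
    funext i; fin_cases i <;> norm_num
  · have := mem_S14 _ _ e1 e3
    convert this using 1
    funext i; fin_cases i <;> norm_num
  · have := mem_S14 _ _ e2 e1'
    convert this using 1
    funext i; fin_cases i <;> norm_num
  · have := mem_S14 _ _ e2 e3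
    convert this using 1
    funext i; fin_cases i <;> norm_num

lemma kleisli14_eq : kleisli14 = convexHull ℝ T14 := by
  rw [kleisli14_eq_hull_S14]
  apply Set.Subset.antisymm
  · exact convexHull_min S14_subset (convex_convexHull ℝ _)
  · exact convexHull_min (T14_subset_S14.trans (subset_convexHull ℝ _)) (convex_convexHull ℝ _)

lemma range_compCol : Set.range compCol = ({![(1:ℝ),0,0], ![0,1/2,1/2]} : Set (Fin 3 → ℝ)) := by
  rw [range_fin_two', compCol_zero, compCol_one]

/-- The image of `g ∘ f` is the hull of `{(1,0,0), (0,1/2,1/2)}`, the Kleisli-CP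
composite `R(g) ∘ R(f)` is the hull of the four listed points, and the former is
a proper subset of the latter. -/
theorem tighter_bounds_example :
    convexHull ℝ (Set.range compCol)
        = convexHull ℝ ({![(1:ℝ),0,0], ![0,1/2,1/2]} : Set (Fin 3 → ℝ)) ∧
    kleisli14
        = convexHull ℝ
            ({![(1:ℝ),0,0], ![1/2,0,1/2], ![1/2,1/2,0], ![0,1/2,1/2]} : Set (Fin 3 → ℝ)) ∧
    convexHull ℝ (Set.range compCol) ⊂ kleisli14 := by
  refine ⟨by rw [range_compCol], kleisli14_eq, ?_⟩
  rw [range_compCol, kleisli14_eq]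
  constructor
  · apply convexHull_mono
    rintro y (rfl | rfl)
    · exact Or.inl rfl
    · exact Or.inr (Or.inr (Or.inr rfl))
  · intro hsub
    have hmem : ![(1:ℝ)/2,1/2,0] ∈ convexHull ℝ T14 :=
      subset_convexHull ℝ T14 (Or.inr (Or.inr (Or.inl rfl)))
    have hmem' := hsub hmem
    rw [convexHull_pair] at hmem'
    obtain ⟨a, b, ha, hb, hab, h⟩ := hmem'
    have h1 := congrFun h 1
    have h2 := congrFun h 2
    simp at h1 h2
    nlinarith
end

section
/- For the map φ taking a stochastic matrix f ∈ FinStoch(m, n) to the convex hull of its columns in D(n): φ(f) is invariant under precomposition with surjective stochastic maps (φ(f ∘ g) = φ(f) for g surjective stochastic m' → m), and φ(D(h) ∘ f) = CP(h)(φ(f)) for any function h : n → n', where CP(h) is the pointwise pushforward of probability vectors. -/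
/-- Stochastic matrix predicate: columns are probability vectors. -/
def Stoch' {m n : ℕ} (f : Fin n → Fin m → ℝ) : Prop :=
  (∀ a i, 0 ≤ f a i) ∧ ∀ i, ∑ a, f a i = 1

/-- A stochastic map is surjective if every Dirac distribution on the codomain
appears among its columns. -/
def SurjStoch {m n : ℕ} (f : Fin n → Fin m → ℝ) : Prop :=
  ∀ j : Fin n, ∃ i : Fin m, (fun a => f a i) = fun a => if a = j then (1 : ℝ) else 0

open Finset

section WeightedColumns

variable {ι κ E : Type*} [Fintype ι] [AddCommGroup E] [Module ℝ E]

theorem convexHull_range_weightedSum_subset (v : ι → E) (w : ι → κ → ℝ)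
    (hw₀ : ∀ i k, 0 ≤ w i k) (hw₁ : ∀ k, ∑ i, w i k = 1) :
    convexHull ℝ (Set.range fun k => ∑ i, w i k • v i) ⊆ convexHull ℝ (Set.range v) :=
  convexHull_min
    (Set.range_subset_iff.2 fun k => (convex_convexHull ℝ _).sum_mem (fun i _ => hw₀ i k)
      (hw₁ k) fun i _ => subset_convexHull ℝ _ ⟨i, rfl⟩)
    (convex_convexHull ℝ _)

theorem range_subset_range_weightedSum [DecidableEq ι] (v : ι → E) (w : ι → κ → ℝ)
    (hw : ∀ j, ∃ k, (fun i => w i k) = fun i => if i = j then (1 : ℝ) else 0) :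
    Set.range v ⊆ Set.range fun k => ∑ i, w i k • v i := by
  rintro _ ⟨j, rfl⟩
  obtain ⟨k, hk⟩ := hw j
  refine ⟨k, ?_⟩
  simp [fun i => congrFun hk i]

theorem convexHull_range_weightedSum_eq [DecidableEq ι] (v : ι → E) (w : ι → κ → ℝ)
    (hw₀ : ∀ i k, 0 ≤ w i k) (hw₁ : ∀ k, ∑ i, w i k = 1)
    (hw : ∀ j, ∃ k, (fun i => w i k) = fun i => if i = j then (1 : ℝ) else 0) :
    convexHull ℝ (Set.range fun k => ∑ i, w i k • v i) = convexHull ℝ (Set.range v) :=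
  (convexHull_range_weightedSum_subset v w hw₀ hw₁).antisymm
    (convexHull_mono (range_subset_range_weightedSum v w hw))

end WeightedColumns

/-- `D(h)`: the pushforward of (probability) vectors along `h`. -/
def pushforward {α β R : Type*} [Fintype α] [DecidableEq β] [CommSemiring R] (h : α → β) :
    (α → R) →ₗ[R] (β → R) where
  toFun p b := ∑ a, if h a = b then p a else 0
  map_add' p q := by
    funext b
    simp only [Pi.add_apply, ← sum_add_distrib, ite_add_zero]
  map_smul' c p := by
    funext b
    simp only [Pi.smul_apply, smul_eq_mul, RingHom.id_apply, mul_sum, mul_ite, mul_zero]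

theorem phi_natural_general {m n : ℕ} (f : Fin n → Fin m → ℝ) :
    (∀ m' : ℕ, ∀ g : Fin m → Fin m' → ℝ, Stoch' g → SurjStoch g →
      convexHull ℝ (Set.range (fun i : Fin m' => fun a => ∑ b, f a b * g b i))
        = convexHull ℝ (Set.range (fun i : Fin m => fun a => f a i)))
    ∧
    (∀ n' : ℕ, ∀ h : Fin n → Fin n',
      convexHull ℝ
          (Set.range (fun i : Fin m => fun a' => ∑ a, if h a = a' then f a i else 0))
        = (fun p : Fin n → ℝ => fun a' => ∑ a, if h a = a' then p a else 0) ''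
            convexHull ℝ (Set.range (fun i : Fin m => fun a => f a i))) := by
  refine ⟨fun m' g hg hg_surj => ?_, fun n' h => ?_⟩
  · have hcols : (fun i : Fin m' => fun a => ∑ b, f a b * g b i)
        = fun i => ∑ b, g b i • fun a => f a b := by
      funext i a
      simp [Finset.sum_apply, mul_comm]
    rw [hcols]
    exact convexHull_range_weightedSum_eq _ g hg.1 hg.2 hg_surj
  · have := (pushforward (R := ℝ) h).image_convexHull (Set.range fun i a => f a i)
    rw [← Set.range_comp] at this
    exact this.symm

/-- `φ(f)`, the convex hull of the columns of `f`, is invariant under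
precomposition with surjective stochastic maps, and is natural with respect to
pushforward along functions of the outcome space. -/
theorem phi_natural {m n : ℕ} (f : Fin n → Fin m → ℝ) (hf : Stoch' f) :
    (∀ m' : ℕ, ∀ g : Fin m → Fin m' → ℝ, Stoch' g → SurjStoch g →
      convexHull ℝ (Set.range (fun i : Fin m' => fun a => ∑ b, f a b * g b i))
        = convexHull ℝ (Set.range (fun i : Fin m => fun a => f a i)))
    ∧
    (∀ n' : ℕ, ∀ h : Fin n → Fin n',
      convexHull ℝ
          (Set.range (fun i : Fin m => fun a' => ∑ a, if h a = a' then f a i else 0))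
        = (fun p : Fin n → ℝ => fun a' => ∑ a, if h a = a' then p a else 0) ''
            convexHull ℝ (Set.range (fun i : Fin m => fun a => f a i))) :=
  phi_natural_general f
end
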